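/- Let p be an odd prime and n a positive integer with n ≤ p. A class ρ ∈ Ξ_n is fixed by the induced negation involution (ρ^▼ = ρ) if and only if ρ = π(e) for some subset e of F_p of cardinality n with {−x : x ∈ e} = e. Equivalently, the projection π : Ξ̃_n → Ξ_n maps Ξ̃_{n,sym} onto Ξ_{n,sym}. -/

import Mathlib

/-- `Ξ̃_k`: the set of finite subsets of `F_p = ZMod p` of cardinality `k`,
realized as a subtype. -/
def XtS (p k : ℕ) := {e : Finset (ZMod p) // e.card = k}

/-- Translation equivalence: `e₁ ∼ e₂` iff `e₁ = {x + c : x ∈ e₂}` for some `c ∈ F_p`. -/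
def xiRel (p k : ℕ) (e₁ e₂ : XtS p k) : Prop :=
  ∃ c : ZMod p, e₁.1 = e₂.1.image (· + c)

/-- The setoid on `Ξ̃_k` given by translation equivalence. -/
def xiSetoid (p k : ℕ) : Setoid (XtS p k) where
  r := xiRel p k
  iseqv := by
    constructor
    · intro e; exact ⟨0, by simp⟩
    · rintro e₁ e₂ ⟨c, h⟩
      exact ⟨-c, by rw [h, Finset.image_image]; simp [Function.comp]⟩
    · rintro e₁ e₂ e₃ ⟨c, h₁⟩ ⟨d, h₂⟩
      exact ⟨d + c, by rw [h₁, h₂, Finset.image_image]; simp [Function.comp, add_assoc]⟩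

/-- `Ξ_k`: the quotient of `Ξ̃_k` by translation equivalence. -/
abbrev Xi (p k : ℕ) := Quotient (xiSetoid p k)

/-- Negation `e ↦ e^▼ = {-x : x ∈ e}` on `Ξ̃_k`. -/
def negXt (p k : ℕ) (e : XtS p k) : XtS p k :=
  ⟨e.1.image (fun x => -x), by
    rw [Finset.card_image_of_injective _ neg_injective]; exact e.2⟩

/-- Complementation `e ↦ e^▲ = F_p \ e`, from `Ξ̃_k` to `Ξ̃_{p-k}`. -/
def complXt (p k : ℕ) [NeZero p] (e : XtS p k) : XtS p (p - k) :=
  ⟨Finset.univ \ e.1, by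
    rw [Finset.card_sdiff, Finset.inter_univ, Finset.card_univ, ZMod.card, e.2]⟩

/-- Complementation from `Ξ̃_{p-k}` back to `Ξ̃_k` (for `k ≤ p`). -/
def complXtBack (p k : ℕ) [NeZero p] (hk : k ≤ p) (e : XtS p (p - k)) : XtS p k :=
  ⟨Finset.univ \ e.1, by
    rw [Finset.card_sdiff, Finset.inter_univ, Finset.card_univ, ZMod.card, e.2,
      Nat.sub_sub_self hk]⟩

/-- `e ↦ e^▽ = {-x : x ∈ F_p \ e}`, from `Ξ̃_k` to `Ξ̃_{p-k}`. -/
def nablaXt (p k : ℕ) [NeZero p] (e : XtS p k) : XtS p (p - k) :=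
  ⟨(Finset.univ \ e.1).image (fun x => -x), by
    rw [Finset.card_image_of_injective _ neg_injective,
      Finset.card_sdiff, Finset.inter_univ, Finset.card_univ, ZMod.card, e.2]⟩

/-- `e ↦ e^▽` from `Ξ̃_{p-k}` back to `Ξ̃_k` (for `k ≤ p`). -/
def nablaXtBack (p k : ℕ) [NeZero p] (hk : k ≤ p) (e : XtS p (p - k)) : XtS p k :=
  ⟨(Finset.univ \ e.1).image (fun x => -x), by
    rw [Finset.card_image_of_injective _ neg_injective,
      Finset.card_sdiff, Finset.inter_univ, Finset.card_univ, ZMod.card, e.2,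
      Nat.sub_sub_self hk]⟩

/-- For an odd prime `p` and `0 < n ≤ p`, a class `ρ ∈ Ξ_n` is fixed by the
negation involution `(-)^▼` if and only if `ρ = π(e)` for some negation-stable subset `e`
of `F_p` of cardinality `n`; i.e. `π` maps `Ξ̃_{n,sym}` onto `Ξ_{n,sym}`. -/
theorem sym_class_has_sym_representative (p n : ℕ) [Fact p.Prime] (hodd : Odd p)
    (hn : 0 < n) (hnp : n ≤ p) :
    ∃ Fv : Xi p n → Xi p n,
      (∀ e : XtS p n,
        Fv (Quotient.mk (xiSetoid p n) e) = Quotient.mk (xiSetoid p n) (negXt p n e)) ∧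
      ∀ ρ : Xi p n, Fv ρ = ρ ↔
        ∃ e : XtS p n, e.1.image (fun x => -x) = e.1 ∧ ρ = Quotient.mk (xiSetoid p n) e := by
  
  classical
  have hrespect : ∀ a b : XtS p n, xiRel p n a b → xiRel p n (negXt p n a) (negXt p n b) := by
    rintro a b ⟨c, h⟩
    refine ⟨-c, ?_⟩
    simp only [negXt, h, Finset.image_image]
    congr 1
    ext x
    simp [Function.comp]
    ring
  refine ⟨Quotient.map (negXt p n) hrespect, fun e => rfl, ?_⟩
  intro ρ
  constructor
  · intro hfix
    obtain ⟨e, rfl⟩ := Quotient.exists_rep ρ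
    have h : xiRel p n (negXt p n e) e := Quotient.exact hfix
    obtain ⟨c, hc⟩ := h
    have h2 : (2 : ZMod p) ≠ 0 := by
      have hp2 : p ≠ 2 := by
        rintro rfl; exact (Nat.not_odd_iff_even.mpr (by decide)) hodd
      intro h0
      have : (p : ℕ) ∣ 2 := by
        have : ((2 : ℕ) : ZMod p) = 0 := by exact_mod_cast h0
        exact (ZMod.natCast_eq_zero_iff 2 p).mp this
      exact hp2 ((Nat.prime_dvd_prime_iff_eq Fact.out Nat.prime_two).mp this)
    set c' : ZMod p := c * (2 : ZMod p)⁻¹ with hc'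
    have hcc : c' + c' = c := by
      rw [hc']; field_simp; ring
    refine ⟨⟨e.1.image (· + c'), by
        rw [Finset.card_image_of_injective _ (add_left_injective c')]; exact e.2⟩, ?_, ?_⟩
    · show (e.1.image (· + c')).image (fun x => -x) = e.1.image (· + c')
      have hneg : e.1.image (fun x => -x) = e.1.image (· + c) := hc
      calc (e.1.image (· + c')).image (fun x => -x)
          = e.1.image (fun x => -x + -c') := by
            rw [Finset.image_image]; congr 1; ext x; simp [Function.comp]; ring
        _ = (e.1.image (fun x => -x)).image (· + -c') := by rw [Finset.image_image]; rfl
        _ = (e.1.image (· + c)).image (· + -c') := by rw [hneg]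
        _ = e.1.image (· + c') := by
            rw [Finset.image_image]; congr 1; ext x; simp [Function.comp]
            rw [← hcc]; ring
    · apply Quotient.sound
      refine ⟨-c', ?_⟩
      show e.1 = (e.1.image (· + c')).image (· + -c')
      rw [Finset.image_image]
      ext x; simp
  · rintro ⟨e, he, rfl⟩
    apply Quotient.sound
    show xiRel p n (negXt p n e) e
    refine ⟨0, ?_⟩
    simpa [negXt] using he
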